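/- arXiv:2108.00979 — 2 statements merged into one kernel-verified Lean document; each statement's English description precedes it below -/
import Mathlib

section
/- Let n ≥ 1 and let Λₙ = Λ(n, n−1, …, 1) ⊆ ℝⁿ be the regular SIM-body, i.e., the SIM-body with parameters α_k = n − k + 1 for k = 1,…,n. Then the set of extreme points of Λₙ is finite and has cardinality Σ_{k=0}^{n} n!/k!. -/
open Finset

/-- The SIM-body `Λ(α₁,…,αₙ)` for parameters `α : Fin n → ℝ` (0-indexed). -/
def SIM {n : ℕ} (α : Fin n → ℝ) : Set (Fin n → ℝ) :=
  {x | (∀ i, 0 ≤ x i) ∧ ∀ I : Finset (Fin n), I.Nonempty →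
    ∑ i ∈ I, x i ≤ ∑ j ∈ Finset.univ.filter (fun j : Fin n => (j : ℕ) < I.card), α j}

/-!
The tight sets of a point `x` of the body (those `I` with `∑ i ∈ I, x i = α₀ + ⋯ + α_{#I-1}`)
form a chain, because the partial sums of a strictly decreasing sequence are strictly concave.
At an extreme point `x` no perturbation supported on the positive coordinates and balanced on
every tight set is possible: so every positive coordinate lies in a tight set, any two positive
coordinates are separated by one, consecutive tight sets differ by a single element, and `x`
takes the values `α₀, …, α_{k-1}` on `k` distinct coordinates and vanishes elsewhere.
Conversely such a point is the only point of the body at which all of its prefix constraints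
are tight. The extreme points are thus indexed by the injections `Fin k → Fin n`, `k ≤ n`.
-/

open Filter Topology

section Convex

variable {E : Type*} [AddCommGroup E] [Module ℝ E]

theorem eq_zero_of_mem_extremePoints_of_eventually_add_smul_mem {A : Set E} {x d : E}
    (hx : x ∈ A.extremePoints ℝ) (hd : ∀ᶠ t : ℝ in 𝓝 0, x + t • d ∈ A) : d = 0 := by
  obtain ⟨ε, hε, hball⟩ := Metric.eventually_nhds_iff.mp hd
  have hmem : ∀ t, |t| < ε → x + t • d ∈ A := fun t ht => hball (by simpa using ht)
  have hseg : x ∈ openSegment ℝ (x + (ε / 2) • d) (x + (-(ε / 2)) • d) :=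
    ⟨1 / 2, 1 / 2, by norm_num, by norm_num, by norm_num, by module⟩
  have h := hx.2 (hmem _ (by rw [abs_of_pos (half_pos hε)]; linarith))
    (hmem _ (by rw [abs_neg, abs_of_pos (half_pos hε)]; linarith)) hseg
  simpa [hε.ne'] using h

theorem LinearMap.eq_of_mem_openSegment_of_le (ℓ : E →ₗ[ℝ] ℝ) {x y z : E} {c : ℝ}
    (hx : x ∈ openSegment ℝ y z) (hxc : ℓ x = c) (hy : ℓ y ≤ c) (hz : ℓ z ≤ c) : ℓ y = c := by
  obtain ⟨a, b, ha, hb, hab, rfl⟩ := hx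
  simp only [map_add, map_smul, smul_eq_mul] at hxc
  refine le_antisymm hy (not_lt.1 fun h => ?_)
  have hc : a * c + b * c = c := by rw [← add_mul, hab, one_mul]
  linarith [mul_lt_mul_of_pos_left h ha, mul_le_mul_of_nonneg_left hz hb.le]

end Convex

theorem Finset.exists_forall_subset_of_chain {ι : Type*} [Fintype ι] {P : Finset ι → Prop}
    (hP : ∀ I J, P I → P J → I ⊆ J ∨ J ⊆ I) {I₀ : Finset ι} (h₀ : P I₀) :
    ∃ T, P T ∧ ∀ J, P J → J ⊆ T := by
  classical
  obtain ⟨T, hT, hmax⟩ := exists_max_image (univ.filter P) card ⟨I₀, by simpa using h₀⟩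
  rw [mem_filter] at hT
  refine ⟨T, hT.2, fun J hJ => ?_⟩
  rcases hP J T hJ hT.2 with hJT | hTJ
  · exact hJT
  · exact (eq_of_subset_of_card_le hTJ (hmax J (by simpa using hJ))).ge

theorem sum_le_sum_range_card_of_antitoneOn {n : ℕ} {α : ℕ → ℝ} (hα : AntitoneOn α (Set.Iio n))
    {J : Finset ℕ} (hJ : J ⊆ range n) : ∑ j ∈ J, α j ≤ ∑ j ∈ range #J, α j := by
  induction J using Finset.induction_on_max with
  | empty => simp
  | insert M J hlt ih =>
    have hM : M ∉ J := fun h => (hlt M h).false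
    have hMn : M < n := mem_range.mp (hJ (mem_insert_self M J))
    have hJM : #J ≤ M := by
      simpa using card_le_card (fun j hj => mem_range.mpr (hlt j hj) : J ⊆ range M)
    rw [sum_insert hM, card_insert_of_notMem hM, sum_range_succ, add_comm]
    exact add_le_add (ih ((subset_insert M J).trans hJ))
      (hα (Set.mem_Iio.2 (by omega)) (Set.mem_Iio.2 hMn) hJM)

theorem sum_range_add_sum_range_lt_of_strictAntiOn {n : ℕ} {α : ℕ → ℝ}
    (hα : StrictAntiOn α (Set.Iio n)) {u a b q : ℕ} (hua : u < a) (hub : u < b)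
    (hq : a + b = q + u) (hqn : q ≤ n) :
    ∑ j ∈ range u, α j + ∑ j ∈ range q, α j < ∑ j ∈ range a, α j + ∑ j ∈ range b, α j := by
  obtain ⟨t, rfl⟩ : ∃ t, a = u + (t + 1) := ⟨a - u - 1, by omega⟩
  obtain rfl : q = b + (t + 1) := by omega
  rw [sum_range_add α u, sum_range_add α b]
  have : ∑ i ∈ range (t + 1), α (b + i) < ∑ i ∈ range (t + 1), α (u + i) :=
    sum_lt_sum_of_nonempty nonempty_range_add_one fun i hi => by
      have := mem_range.mp hi
      exact hα (Set.mem_Iio.2 (by omega)) (Set.mem_Iio.2 (by omega)) (by omega)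
  linarith

theorem Fin.sum_filter_val_lt {M : Type*} [AddCommMonoid M] {n m : ℕ} (hm : m ≤ n)
    (g : ℕ → M) : ∑ j ∈ univ.filter (fun j : Fin n => (j : ℕ) < m), g j = ∑ j ∈ range m, g j := by
  rw [sum_filter, Fin.sum_univ_eq_sum_range (fun j => if j < m then g j else 0), ← sum_filter]
  congr 1
  ext j
  simp only [mem_filter, mem_range]
  omega

namespace SIM

-- The parameters are the first `n` terms of a sequence `α : ℕ → ℝ`, so that the bound of the
-- constraint of `I` is the partial sum `∑ j ∈ range #I, α j`.
variable {n : ℕ} {α : ℕ → ℝ}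

theorem mem_iff {x : Fin n → ℝ} : x ∈ SIM (fun i : Fin n => α i) ↔
    (∀ i, 0 ≤ x i) ∧ ∀ I : Finset (Fin n), ∑ i ∈ I, x i ≤ ∑ j ∈ range #I, α j := by
  have hbound (I : Finset (Fin n)) := Fin.sum_filter_val_lt (by simpa using card_le_univ I) α
  refine and_congr_right fun _ => ⟨fun h I => ?_, fun h I _ => (hbound I).symm ▸ h I⟩
  rcases I.eq_empty_or_nonempty with rfl | hI
  · simp
  · exact hbound I ▸ h I hI

def IsTight (α : ℕ → ℝ) (x : Fin n → ℝ) (I : Finset (Fin n)) : Prop :=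
  ∑ i ∈ I, x i = ∑ j ∈ range #I, α j

theorem isTight_empty (x : Fin n → ℝ) : IsTight α x ∅ := by simp [IsTight]

variable {x : Fin n → ℝ} {I J : Finset (Fin n)}

theorem IsTight.subset_or_subset (hα : StrictAntiOn α (Set.Iio n))
    (hx : x ∈ SIM (fun i : Fin n => α i)) (hI : IsTight α x I) (hJ : IsTight α x J) :
    I ⊆ J ∨ J ⊆ I := by
  by_contra! h
  have hI' : #(I ∩ J) < #I :=
    card_lt_card ⟨inter_subset_left, fun hs => h.1 fun i hi => (mem_inter.1 (hs hi)).2⟩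
  have hJ' : #(I ∩ J) < #J :=
    card_lt_card ⟨inter_subset_right, fun hs => h.2 fun i hi => (mem_inter.1 (hs hi)).1⟩
  have hlt := sum_range_add_sum_range_lt_of_strictAntiOn hα hI' hJ'
    (card_union_add_card_inter I J).symm (by simpa using card_le_univ (I ∪ J))
  have hsum := sum_union_inter (s₁ := I) (s₂ := J) (f := x)
  have := (mem_iff.1 hx).2 (I ∩ J)
  have := (mem_iff.1 hx).2 (I ∪ J)
  rw [IsTight] at hI hJ
  linarith

theorem IsTight.pos (hpos : ∀ j < n, 0 < α j) (hx : x ∈ SIM (fun i : Fin n => α i))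
    (hI : IsTight α x I) {i : Fin n} (hi : i ∈ I) : 0 < x i := by
  obtain ⟨m, hm⟩ : ∃ m, #I = m + 1 := ⟨#I - 1, by have := card_pos.2 ⟨i, hi⟩; omega⟩
  have hmn : m < n := by have := card_le_univ I; rw [Fintype.card_fin] at this; omega
  have herase := (mem_iff.1 hx).2 (I.erase i)
  rw [card_erase_of_mem hi, hm, Nat.add_sub_cancel] at herase
  rw [IsTight, ← sum_erase_add I x hi, hm, sum_range_succ] at hI
  linarith [hpos m hmn]

theorem eventually_add_smul_mem (hx : x ∈ SIM (fun i : Fin n => α i)) {d : Fin n → ℝ}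
    (hd : ∀ i, d i ≠ 0 → 0 < x i) (hdI : ∀ I, IsTight α x I → ∑ i ∈ I, d i = 0) :
    ∀ᶠ t : ℝ in 𝓝 0, x + t • d ∈ SIM (fun i : Fin n => α i) := by
  obtain ⟨hx0, hxI⟩ := mem_iff.1 hx
  simp only [mem_iff, Pi.add_apply, Pi.smul_apply, smul_eq_mul, sum_add_distrib, ← mul_sum]
  refine (eventually_all.2 fun i => ?_).and (eventually_all.2 fun I => ?_)
  · by_cases hdi : d i = 0
    · simp [hdi, hx0 i]
    · refine (ContinuousAt.eventually_lt (f := fun _ => (0:ℝ)) (by fun_prop) (by fun_prop)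
        ?_).mono fun t ht => ht.le
      simpa using hd i hdi
  · by_cases hI : IsTight α x I
    · simp [hdI I hI, hI.le]
    · refine (ContinuousAt.eventually_lt (by fun_prop) (by fun_prop) ?_).mono fun t ht => ht.le
      simpa using lt_of_le_of_ne (hxI I) hI

theorem eq_zero_of_mem_extremePoints (hx : x ∈ (SIM fun i : Fin n => α i).extremePoints ℝ)
    {d : Fin n → ℝ} (hd : ∀ i, d i ≠ 0 → 0 < x i)
    (hdI : ∀ I, IsTight α x I → ∑ i ∈ I, d i = 0) : d = 0 :=
  eq_zero_of_mem_extremePoints_of_eventually_add_smul_mem hx (eventually_add_smul_mem hx.1 hd hdI)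

theorem exists_isTight_mem (hx : x ∈ (SIM fun i : Fin n => α i).extremePoints ℝ) {a : Fin n}
    (ha : 0 < x a) : ∃ I, IsTight α x I ∧ a ∈ I := by
  by_contra! h
  have hd := eq_zero_of_mem_extremePoints hx (d := Pi.single a 1) (fun i hi => ?_) fun I hI => ?_
  · simpa using congr_fun hd a
  · obtain rfl : i = a := by by_contra hia; simp [hia] at hi
    exact ha
  · simp [sum_pi_single', h I hI]

theorem eq_of_forall_isTight_mem_iff (hx : x ∈ (SIM fun i : Fin n => α i).extremePoints ℝ)
    {a b : Fin n} (ha : 0 < x a) (hb : 0 < x b) (h : ∀ I, IsTight α x I → (a ∈ I ↔ b ∈ I)) :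
    a = b := by
  by_contra hab
  have hd := eq_zero_of_mem_extremePoints hx (d := Pi.single a 1 - Pi.single b 1)
    (fun i hi => ?_) fun I hI => ?_
  · simpa [hab] using congr_fun hd a
  · by_cases hia : i = a
    · exact hia ▸ ha
    by_cases hib : i = b
    · exact hib ▸ hb
    simp [hia, hib] at hi
  · simp [sum_pi_single', h I hI]

theorem IsTight.exists_eq_insert (hα : StrictAntiOn α (Set.Iio n)) (hpos : ∀ j < n, 0 < α j)
    (hx : x ∈ (SIM fun i : Fin n => α i).extremePoints ℝ) (hI : IsTight α x I) (hne : I.Nonempty) :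
    ∃ a T, IsTight α x T ∧ a ∉ T ∧ I = insert a T := by
  obtain ⟨T, ⟨hT, hTI⟩, hmax⟩ := exists_forall_subset_of_chain
    (P := fun J => IsTight α x J ∧ J ⊂ I) (fun J K hJ hK => hJ.1.subset_or_subset hα hx.1 hK.1)
    ⟨isTight_empty x, hne.empty_ssubset⟩
  obtain ⟨a, haI, haT⟩ := exists_of_ssubset hTI
  -- A tight set either contains `I` or lies in `T`, so it cannot separate two points of `I \ T`.
  have hsep (b) (hbI : b ∈ I) (hbT : b ∉ T) : b = a :=
    eq_of_forall_isTight_mem_iff hx (hI.pos hpos hx.1 hbI) (hI.pos hpos hx.1 haI) fun J hJ => by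
      rcases hJ.subset_or_subset hα hx.1 hI with hJI | hIJ
      · rcases eq_or_ne J I with rfl | hJI'
        · exact iff_of_true hbI haI
        · have hJT := hmax J ⟨hJ, hJI.ssubset_of_ne hJI'⟩
          exact iff_of_false (fun h => hbT (hJT h)) (fun h => haT (hJT h))
      · exact iff_of_true (hIJ hbI) (hIJ haI)
  refine ⟨a, T, hT, haT, ext fun b => ⟨fun hb => ?_, fun hb => ?_⟩⟩
  · by_cases hbT : b ∈ T
    · exact mem_insert_of_mem hbT
    · exact hsep b hb hbT ▸ mem_insert_self a T
  · rcases mem_insert.1 hb with rfl | hbT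
    · exact haI
    · exact hTI.subset hbT

theorem IsTight.exists_injective (hα : StrictAntiOn α (Set.Iio n)) (hpos : ∀ j < n, 0 < α j)
    (hx : x ∈ (SIM fun i : Fin n => α i).extremePoints ℝ) (hI : IsTight α x I) :
    ∃ k, ∃ f : Fin k → Fin n, Function.Injective f ∧ Set.range f = I ∧ ∀ j, x (f j) = α j := by
  induction I using Finset.strongInduction with
  | H I ih =>
  rcases I.eq_empty_or_nonempty with rfl | hne
  · exact ⟨0, Fin.elim0, fun i => i.elim0, by simp, fun j => j.elim0⟩
  obtain ⟨a, T, hT, haT, rfl⟩ := hI.exists_eq_insert hα hpos hx hne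
  obtain ⟨k, f, hf, hfT, hfx⟩ := ih T (ssubset_insert haT) hT
  have hk : #T = k := by
    rw [← Set.ncard_coe_finset, ← hfT, Set.ncard_range_of_injective hf, Nat.card_eq_fintype_card,
      Fintype.card_fin]
  refine ⟨k + 1, Fin.snoc f a, Fin.snoc_injective_of_injective hf (hfT ▸ haT), by simp [hfT],
    fun j => ?_⟩
  induction j using Fin.lastCases with
  | last =>
    rw [IsTight, sum_insert haT, card_insert_of_notMem haT, sum_range_succ, hT, hk] at hI
    simpa using (by linarith : x a = α k)
  | cast j => simpa using hfx j

noncomputable def vertex (α : ℕ → ℝ) {k : ℕ} (f : Fin k → Fin n) : Fin n → ℝ :=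
  fun i => ∑ j, if f j = i then α j else 0

variable {k : ℕ} {f : Fin k → Fin n}

theorem vertex_apply (hf : Function.Injective f) (j : Fin k) : vertex α f (f j) = α j := by
  simp [vertex, hf.eq_iff]

theorem vertex_apply_of_notMem_range {i : Fin n} (hi : i ∉ Set.range f) : vertex α f i = 0 :=
  sum_eq_zero fun j _ => if_neg fun h => hi ⟨j, h⟩

theorem eq_vertex_of_mem_extremePoints (hα : StrictAntiOn α (Set.Iio n)) (hpos : ∀ j < n, 0 < α j)
    (hx : x ∈ (SIM fun i : Fin n => α i).extremePoints ℝ) :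
    ∃ k, ∃ f : Fin k → Fin n, Function.Injective f ∧ x = vertex α f := by
  obtain ⟨M, hM, hmax⟩ := exists_forall_subset_of_chain (P := IsTight α x)
    (fun I J hI hJ => hI.subset_or_subset hα hx.1 hJ) (isTight_empty x)
  obtain ⟨k, f, hf, hfM, hfx⟩ := hM.exists_injective hα hpos hx
  refine ⟨k, f, hf, funext fun i => ?_⟩
  by_cases hi : i ∈ Set.range f
  · obtain ⟨j, rfl⟩ := hi
    rw [hfx, vertex_apply hf]
  · rw [vertex_apply_of_notMem_range hi]
    refine le_antisymm (not_lt.1 fun hxi => ?_) ((mem_iff.1 hx.1).1 i)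
    obtain ⟨J, hJ, hiJ⟩ := exists_isTight_mem hx hxi
    exact hi (hfM ▸ hmax J hJ hiJ)

theorem sum_vertex (I : Finset (Fin n)) :
    ∑ i ∈ I, vertex α f i = ∑ j ∈ univ.filter (fun j => f j ∈ I), α j := by
  simp only [vertex]
  rw [sum_comm, sum_filter]
  simp [sum_ite_eq]

def prefixSet (f : Fin k → Fin n) (m : ℕ) : Finset (Fin n) :=
  (univ.filter fun j : Fin k => (j : ℕ) < m).image f

theorem card_prefixSet (hf : Function.Injective f) {m : ℕ} (hm : m ≤ k) :
    #(prefixSet f m) = m := by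
  rw [prefixSet, card_image_of_injective _ hf, Fin.card_filter_val_lt, min_eq_right hm]

theorem prefixSet_succ (j : Fin k) : prefixSet f (j + 1) = insert (f j) (prefixSet f j) := by
  ext i
  simp only [prefixSet, mem_insert, mem_image, mem_filter, mem_univ, true_and]
  constructor
  · rintro ⟨l, hl, rfl⟩
    rcases Nat.lt_succ_iff_lt_or_eq.1 hl with hl | hl
    · exact Or.inr ⟨l, hl, rfl⟩
    · exact Or.inl (congrArg f (Fin.ext hl))
  · rintro (rfl | ⟨l, hl, rfl⟩)
    exacts [⟨j, by omega, rfl⟩, ⟨l, by omega, rfl⟩]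

theorem apply_notMem_prefixSet (hf : Function.Injective f) (j : Fin k) :
    f j ∉ prefixSet f j := by
  simp [prefixSet, hf.eq_iff]

theorem isTight_vertex_prefixSet (hf : Function.Injective f) {m : ℕ} (hm : m ≤ k) :
    IsTight α (vertex α f) (prefixSet f m) := by
  rw [IsTight, card_prefixSet hf hm, prefixSet, sum_image hf.injOn]
  simp only [vertex_apply hf]
  exact Fin.sum_filter_val_lt hm α

theorem eq_vertex_of_isTight (hf : Function.Injective f) {y : Fin n → ℝ}
    (hy : ∀ m ≤ k, IsTight α y (prefixSet f m)) (hy0 : ∀ i ∉ Set.range f, y i = 0) :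
    y = vertex α f := by
  funext i
  by_cases hi : i ∈ Set.range f
  · obtain ⟨j, rfl⟩ := hi
    have h₁ := hy (j + 1) j.isLt
    have h₀ := hy j j.isLt.le
    rw [IsTight, card_prefixSet hf j.isLt] at h₁
    rw [prefixSet_succ, sum_insert (apply_notMem_prefixSet hf j), sum_range_succ] at h₁
    rw [IsTight, card_prefixSet hf j.isLt.le] at h₀
    rw [vertex_apply hf]
    linarith
  · rw [hy0 i hi, vertex_apply_of_notMem_range hi]

theorem vertex_mem (hα : AntitoneOn α (Set.Iio n)) (hpos : ∀ j < n, 0 ≤ α j)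
    (hf : Function.Injective f) : vertex α f ∈ SIM (fun i : Fin n => α i) := by
  have hkn : k ≤ n := by simpa using Fintype.card_le_of_injective f hf
  refine mem_iff.2 ⟨fun i => sum_nonneg fun j _ => ?_, fun I => ?_⟩
  · split_ifs
    exacts [hpos j (by omega), le_rfl]
  rw [sum_vertex]
  set J := univ.filter fun j => f j ∈ I
  have hJI : #J ≤ #I := card_le_card_of_injOn f (fun j hj => (mem_filter.1 hj).2) hf.injOn
  have hIn : #I ≤ n := by simpa using card_le_univ I
  calc ∑ j ∈ J, α j = ∑ j ∈ J.map Fin.valEmbedding, α j := by rw [sum_map]; rfl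
    _ ≤ ∑ j ∈ range #J, α j := by
      rw [← card_map Fin.valEmbedding]
      refine sum_le_sum_range_card_of_antitoneOn hα fun j hj => ?_
      obtain ⟨a, -, rfl⟩ := mem_map.1 hj
      exact mem_range.2 (a.isLt.trans_le hkn)
    _ ≤ ∑ j ∈ range #I, α j :=
      sum_le_sum_of_subset_of_nonneg (range_subset_range.2 hJI) fun j hj _ =>
        hpos j ((mem_range.1 hj).trans_le hIn)

theorem IsTight.of_mem_openSegment {y z : Fin n → ℝ} (hy : y ∈ SIM (fun i : Fin n => α i))
    (hz : z ∈ SIM (fun i : Fin n => α i)) (hyz : x ∈ openSegment ℝ y z) (hI : IsTight α x I) :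
    IsTight α y I := by
  have h := (∑ i ∈ I, LinearMap.proj (R := ℝ) (φ := fun _ : Fin n => ℝ) i
    ).eq_of_mem_openSegment_of_le hyz (c := ∑ j ∈ range #I, α j) (by simpa [IsTight] using hI)
    (by simpa using (mem_iff.1 hy).2 I) (by simpa using (mem_iff.1 hz).2 I)
  simpa [IsTight] using h

theorem vertex_mem_extremePoints (hα : AntitoneOn α (Set.Iio n)) (hpos : ∀ j < n, 0 ≤ α j)
    (hf : Function.Injective f) :
    vertex α f ∈ (SIM fun i : Fin n => α i).extremePoints ℝ := by
  refine ⟨vertex_mem hα hpos hf, fun y hy z hz hyz =>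
    eq_vertex_of_isTight hf (fun m hm => ?_) fun i hi => ?_⟩
  · exact (isTight_vertex_prefixSet hf hm).of_mem_openSegment hy hz hyz
  · have h := (-LinearMap.proj (R := ℝ) (φ := fun _ : Fin n => ℝ) i).eq_of_mem_openSegment_of_le
      hyz (c := 0) (by simp [vertex_apply_of_notMem_range hi]) (by simpa using (mem_iff.1 hy).1 i)
      (by simpa using (mem_iff.1 hz).1 i)
    simpa using h

theorem vertex_injective (hα : StrictAntiOn α (Set.Iio n)) (hpos : ∀ j < n, 0 < α j)
    {g : Fin k → Fin n} (hf : Function.Injective f) (hg : Function.Injective g)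
    (h : vertex α f = vertex α g) : f = g := by
  have hkn : k ≤ n := by simpa using Fintype.card_le_of_injective f hf
  funext j
  have hfj : vertex α g (f j) = α j := h ▸ vertex_apply hf j
  by_cases hj : f j ∈ Set.range g
  · obtain ⟨j', hj'⟩ := hj
    rw [← hj', vertex_apply hg] at hfj
    rw [← hj', Fin.ext (hα.injOn (Set.mem_Iio.2 (by omega)) (Set.mem_Iio.2 (by omega)) hfj)]
  · rw [vertex_apply_of_notMem_range hj] at hfj
    exact absurd hfj (hpos j (by omega)).ne

theorem card_filter_vertex_ne_zero (hpos : ∀ j < n, 0 < α j) (hf : Function.Injective f) :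
    #(univ.filter fun i => vertex α f i ≠ 0) = k := by
  have hkn : k ≤ n := by simpa using Fintype.card_le_of_injective f hf
  convert (card_image_of_injective univ hf).trans (card_fin k)
  ext i
  simp only [mem_filter, mem_univ, true_and, mem_image]
  constructor
  · intro hi
    by_contra h
    exact hi (vertex_apply_of_notMem_range (by simpa using h))
  · rintro ⟨j, -, rfl⟩
    rw [vertex_apply hf]
    exact (hpos j (by omega)).ne'

theorem injective_vertex_sigma (hα : StrictAntiOn α (Set.Iio n)) (hpos : ∀ j < n, 0 < α j) :
    Function.Injective fun p : Σ k : Fin (n + 1), Fin k ↪ Fin n => vertex α p.2 := by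
  rintro ⟨k, f⟩ ⟨k', f'⟩ h
  obtain rfl : k = k' := Fin.ext <| by
    rw [← card_filter_vertex_ne_zero hpos f.injective,
      ← card_filter_vertex_ne_zero hpos f'.injective]
    simp only at h
    rw [h]
  obtain rfl := DFunLike.coe_injective (vertex_injective hα hpos f.injective f'.injective h)
  rfl

theorem extremePoints_eq_range (hα : StrictAntiOn α (Set.Iio n)) (hpos : ∀ j < n, 0 < α j) :
    (SIM fun i : Fin n => α i).extremePoints ℝ =
      Set.range fun p : Σ k : Fin (n + 1), Fin k ↪ Fin n => vertex α p.2 := by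
  refine subset_antisymm (fun x hx => ?_) ?_
  · obtain ⟨k, f, hf, rfl⟩ := eq_vertex_of_mem_extremePoints hα hpos hx
    have hkn : k ≤ n := by simpa using Fintype.card_le_of_injective f hf
    exact ⟨⟨⟨k, by omega⟩, ⟨f, hf⟩⟩, rfl⟩
  · rintro _ ⟨⟨k, f⟩, rfl⟩
    exact vertex_mem_extremePoints hα.antitoneOn (fun j hj => (hpos j hj).le) f.injective

theorem finite_extremePoints (hα : StrictAntiOn α (Set.Iio n)) (hpos : ∀ j < n, 0 < α j) :
    ((SIM fun i : Fin n => α i).extremePoints ℝ).Finite :=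
  extremePoints_eq_range hα hpos ▸ Set.finite_range _

theorem ncard_extremePoints (hα : StrictAntiOn α (Set.Iio n)) (hpos : ∀ j < n, 0 < α j) :
    ((SIM fun i : Fin n => α i).extremePoints ℝ).ncard =
      ∑ k ∈ range (n + 1), n.descFactorial k := by
  rw [extremePoints_eq_range hα hpos, Set.ncard_range_of_injective (injective_vertex_sigma hα hpos),
    Nat.card_eq_fintype_card, Fintype.card_sigma]
  simp only [Fintype.card_embedding_eq, Fintype.card_fin]
  exact Fin.sum_univ_eq_sum_range (n.descFactorial ·) (n + 1)

end SIM

theorem Nat.sum_range_descFactorial_eq_sum_factorial_div (n : ℕ) :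
    ∑ k ∈ range (n + 1), n.descFactorial k = ∑ k ∈ range (n + 1), n.factorial / k.factorial := by
  rw [← sum_range_reflect (fun k => n.factorial / k.factorial)]
  refine sum_congr rfl fun k hk => ?_
  rw [mem_range] at hk
  rw [Nat.descFactorial_eq_div (by omega)]
  congr 2

theorem regular_sim_body_vertex_count_general (n : ℕ) :
    (Set.extremePoints ℝ (SIM (fun i : Fin n => (n : ℝ) - (i : ℕ)))).Finite ∧
      (Set.extremePoints ℝ (SIM (fun i : Fin n => (n : ℝ) - (i : ℕ)))).ncard =
        ∑ k ∈ Finset.range (n + 1), n.factorial / k.factorial := by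
  have hα : StrictAntiOn (fun j : ℕ => (n : ℝ) - j) (Set.Iio n) := fun a _ b _ hab => by
    simpa using hab
  have hpos : ∀ j < n, 0 < (n : ℝ) - j := fun j hj => by simpa using hj
  exact ⟨SIM.finite_extremePoints hα hpos,
    (SIM.ncard_extremePoints hα hpos).trans (Nat.sum_range_descFactorial_eq_sum_factorial_div n)⟩

/-- the regular SIM-body `Λₙ = Λ(n, n−1, …, 1)` has exactly `Σ_{k=0}^n n!/k!`
extreme points. -/
theorem regular_sim_body_vertex_count (n : ℕ) (hn : 1 ≤ n) :
    (Set.extremePoints ℝ (SIM (fun i : Fin n => (n : ℝ) - (i : ℕ)))).Finite ∧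
      (Set.extremePoints ℝ (SIM (fun i : Fin n => (n : ℝ) - (i : ℕ)))).ncard =
        ∑ k ∈ Finset.range (n + 1), n.factorial / k.factorial :=
  regular_sim_body_vertex_count_general n
end

section
/- Let α₁ ≥ ⋯ ≥ αₙ ≥ 0 be real numbers, set ᾱ = α₁ + ⋯ + αₙ, and let Γ ⊆ ℝ^{n+1} be the homogeneous SIM-body, namely the image of the SIM-body Λ(α₁,…,αₙ) under the map x ↦ (x₁,…,xₙ, ᾱ − Σ_{i=1}^{n} x_i). Then every edge of Γ is parallel to the difference of two standard basis vectors: if v ≠ w are points of Γ such that the segment [v,w] is a face of Γ, then there exist indices i ≠ j in {1,…,n+1} and a scalar c ∈ ℝ with v − w = c·(e_i − e_j), where e_i denotes the i-th standard basis vector of ℝ^{n+1}. (Equivalently, Γ is a generalized permutahedron.) -/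
open Finset

/-- The homogeneous SIM-body `Γ(α₁,…,αₙ) ⊆ ℝ^{n+1}`: the image of `Λ(α₁,…,αₙ)` under
`x ↦ (x₁,…,xₙ, ᾱ − Σᵢ xᵢ)`. -/
def homSIM {n : ℕ} (α : Fin n → ℝ) : Set (Fin (n + 1) → ℝ) :=
  (fun x : Fin n → ℝ => Fin.snoc x ((∑ i, α i) - ∑ i, x i)) '' SIM α

/-!
Γ is the base polytope `{y | y(J) ≤ f(J) for all J, y(univ) = f(univ)}` of the set function
`f(J) = ᾱ` if `J` contains the last coordinate and `f(J) = α₁ + ⋯ + α_{|J|}` otherwise; `f` is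
submodular because the `αᵢ` are nonnegative and decreasing, i.e. `k ↦ α₁ + ⋯ + α_k` is monotone and
concave. For the base polytope of any submodular function, let `m` be the midpoint of an edge
`[v, w]`. The sets tight at `m` are closed under intersection, so each coordinate `i` lies in a
smallest tight set `M(i)`. Since `v − w` sums to zero over every tight set, choosing `i` in its
support with `|M(i)|` minimal yields `j ≠ i` in the support with `M(j) = M(i)`: then `i` and `j`
lie in the same tight sets, so `m ± ε(eᵢ − eⱼ)` stays in the polytope for small `ε > 0`, hence on
the edge, and `v − w` is parallel to `eᵢ − eⱼ`.
-/

def IsSubmodular {ι : Type*} [DecidableEq ι] (f : Finset ι → ℝ) : Prop :=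
  ∀ A B : Finset ι, f (A ∪ B) + f (A ∩ B) ≤ f A + f B

def basePolytope {ι : Type*} [Fintype ι] (f : Finset ι → ℝ) : Set (ι → ℝ) :=
  {y | (∀ J : Finset ι, ∑ k ∈ J, y k ≤ f J) ∧ ∑ k, y k = f univ}

def IsTight {ι : Type*} (f : Finset ι → ℝ) (y : ι → ℝ) (J : Finset ι) : Prop :=
  ∑ k ∈ J, y k = f J

theorem exists_sub_eq_smul_sub_of_mem_segment {E : Type*} [AddCommGroup E] [Module ℝ E]
    {v w p q : E} (hp : p ∈ segment ℝ v w) (hq : q ∈ segment ℝ v w) :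
    ∃ t : ℝ, p - q = t • (v - w) := by
  rw [segment_eq_image'] at hp hq
  obtain ⟨a, -, rfl⟩ := hp
  obtain ⟨b, -, rfl⟩ := hq
  exact ⟨b - a, by module⟩

theorem sum_smul_add_smul_apply {ι : Type*} (J : Finset ι) (a b : ℝ) (u v : ι → ℝ) :
    ∑ k ∈ J, (a • u + b • v) k = a * ∑ k ∈ J, u k + b * ∑ k ∈ J, v k := by
  simp only [Pi.add_apply, Pi.smul_apply, smul_eq_mul, sum_add_distrib, mul_sum]

section BasePolytope

variable {ι : Type*} [Fintype ι] {f : Finset ι → ℝ} {y : ι → ℝ}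

theorem convex_basePolytope : Convex ℝ (basePolytope f) := by
  rintro u ⟨hu, hu_univ⟩ v ⟨hv, hv_univ⟩ a b ha hb hab
  refine ⟨fun J => ?_, ?_⟩
  · calc ∑ k ∈ J, (a • u + b • v) k ≤ a * f J + b * f J := by
          rw [sum_smul_add_smul_apply]
          exact add_le_add (mul_le_mul_of_nonneg_left (hu J) ha)
            (mul_le_mul_of_nonneg_left (hv J) hb)
      _ = f J := by rw [← add_mul, hab, one_mul]
  · rw [sum_smul_add_smul_apply, hu_univ, hv_univ, ← add_mul, hab, one_mul]

theorem isTight_univ (hy : y ∈ basePolytope f) : IsTight f y univ := hy.2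

theorem IsTight.inter [DecidableEq ι] (hf : IsSubmodular f) (hy : y ∈ basePolytope f)
    {A B : Finset ι} (hA : IsTight f y A) (hB : IsTight f y B) : IsTight f y (A ∩ B) := by
  have hunion := hy.1 (A ∪ B)
  have hinter := hy.1 (A ∩ B)
  have := sum_union_inter (s₁ := A) (s₂ := B) (f := y)
  unfold IsTight at *
  linarith [hf A B]

theorem exists_minimal_isTight [DecidableEq ι] (hf : IsSubmodular f) (hy : y ∈ basePolytope f)
    (i : ι) : ∃ M, IsTight f y M ∧ i ∈ M ∧ ∀ J, IsTight f y J → i ∈ J → M ⊆ J := by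
  classical
  let 𝒯 := univ.filter fun J => IsTight f y J ∧ i ∈ J
  have hM : IsTight f y (𝒯.inf id) ∧ i ∈ 𝒯.inf id :=
    inf_induction (p := fun J => IsTight f y J ∧ i ∈ J) ⟨isTight_univ hy, mem_univ i⟩
      (fun A hA B hB => ⟨hA.1.inter hf hy hB.1, mem_inter.2 ⟨hA.2, hB.2⟩⟩)
      (fun J hJ => (mem_filter.1 hJ).2)
  refine ⟨𝒯.inf id, hM.1, hM.2, fun J hJ hiJ => ?_⟩
  exact inf_le (f := id) (mem_filter.2 ⟨mem_univ J, hJ, hiJ⟩)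

theorem exists_ne_forall_isTight_iff [DecidableEq ι] (hf : IsSubmodular f)
    (hy : y ∈ basePolytope f) {d : ι → ℝ} (hd : ∀ J, IsTight f y J → ∑ k ∈ J, d k = 0)
    (hd0 : d ≠ 0) : ∃ i j, i ≠ j ∧ ∀ J, IsTight f y J → (i ∈ J ↔ j ∈ J) := by
  choose M hM_tight hM_mem hM_min using exists_minimal_isTight hf hy
  have hsupp : (univ.filter fun k => d k ≠ 0).Nonempty := by
    obtain ⟨k, hk⟩ := Function.ne_iff.1 hd0
    exact ⟨k, mem_filter.2 ⟨mem_univ k, hk⟩⟩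
  obtain ⟨i, hi, hi_min⟩ := exists_min_image _ (fun k => (M k).card) hsupp
  have hdi : d i ≠ 0 := (mem_filter.1 hi).2
  obtain ⟨j, hj, hdj⟩ : ∃ j ∈ (M i).erase i, d j ≠ 0 := by
    refine exists_ne_zero_of_sum_ne_zero ?_
    rw [sum_erase_eq_sub (hM_mem i), hd _ (hM_tight i), zero_sub, neg_ne_zero]
    exact hdi
  obtain ⟨hji, hjM⟩ := mem_erase.1 hj
  have hMj : M j = M i := eq_of_subset_of_card_le (hM_min j _ (hM_tight i) hjM)
    (hi_min j (mem_filter.2 ⟨mem_univ j, hdj⟩))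
  refine ⟨i, j, hji.symm, fun J hJ => ⟨fun hiJ => hM_min i J hJ hiJ hjM, fun hjJ => ?_⟩⟩
  exact hM_min j J hJ hjJ (hMj ▸ hM_mem i)

theorem eventually_add_smul_mem_basePolytope (hy : y ∈ basePolytope f) {e : ι → ℝ}
    (he : ∀ J, IsTight f y J → ∑ k ∈ J, e k = 0) :
    ∀ᶠ c in nhds (0 : ℝ), y + c • e ∈ basePolytope f := by
  have hsum : ∀ (c : ℝ) (J : Finset ι),
      ∑ k ∈ J, (y + c • e) k = ∑ k ∈ J, y k + c * ∑ k ∈ J, e k := fun c J => by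
    simp only [Pi.add_apply, Pi.smul_apply, smul_eq_mul, sum_add_distrib, mul_sum]
  have hJ : ∀ J, ∀ᶠ c in nhds (0 : ℝ), ∑ k ∈ J, (y + c • e) k ≤ f J := by
    intro J
    by_cases htight : IsTight f y J
    · refine Filter.Eventually.of_forall fun c => ?_
      rw [hsum, he J htight, mul_zero, add_zero]
      exact hy.1 J
    · have hlt : ∑ k ∈ J, y k < f J := lt_of_le_of_ne (hy.1 J) htight
      have hcont : Continuous fun c : ℝ => ∑ k ∈ J, y k + c * ∑ k ∈ J, e k := by fun_prop
      filter_upwards [(hcont.tendsto' 0 _ (by simp)).eventually_lt_const hlt] with c hc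
      exact (hsum c J).trans_le hc.le
  filter_upwards [Filter.eventually_all.2 hJ] with c hc
  exact ⟨hc, by rw [hsum, he univ (isTight_univ hy), mul_zero, add_zero, hy.2]⟩

theorem exists_pos_add_sub_smul_mem_basePolytope (hy : y ∈ basePolytope f) {e : ι → ℝ}
    (he : ∀ J, IsTight f y J → ∑ k ∈ J, e k = 0) :
    ∃ ε : ℝ, 0 < ε ∧ y + ε • e ∈ basePolytope f ∧ y - ε • e ∈ basePolytope f := by
  obtain ⟨δ, hδ, hball⟩ :=
    Metric.eventually_nhds_iff.1 (eventually_add_smul_mem_basePolytope hy he)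
  have hdist : dist (δ / 2) 0 < δ := by
    rw [dist_zero_right, Real.norm_of_nonneg (half_pos hδ).le]
    exact half_lt_self hδ
  refine ⟨δ / 2, half_pos hδ, hball hdist, ?_⟩
  rw [sub_eq_add_neg, ← neg_smul]
  exact hball (by rwa [dist_zero_right, norm_neg, ← dist_zero_right])

theorem IsTight.left_of_mem_openSegment {v w : ι → ℝ} (hv : v ∈ basePolytope f)
    (hw : w ∈ basePolytope f) (hy : y ∈ openSegment ℝ v w) {J : Finset ι}
    (hJ : IsTight f y J) : IsTight f v J := by
  obtain ⟨a, b, ha, hb, hab, rfl⟩ := hy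
  have hsum := sum_smul_add_smul_apply J a b v w
  have hslack : a * (f J - ∑ k ∈ J, v k) + b * (f J - ∑ k ∈ J, w k) = 0 := by
    unfold IsTight at hJ
    linear_combination (f J) * hab - hJ + hsum
  have hv_slack := mul_nonneg ha.le (sub_nonneg.2 (hv.1 J))
  have hw_slack := mul_nonneg hb.le (sub_nonneg.2 (hw.1 J))
  have : a * (f J - ∑ k ∈ J, v k) = 0 := by linarith
  exact (sub_eq_zero.1 ((mul_eq_zero.1 this).resolve_left ha.ne')).symm

theorem IsSubmodular.exists_sub_eq_smul_single_sub_single [DecidableEq ι] (hf : IsSubmodular f)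
    {v w : ι → ℝ} (hv : v ∈ basePolytope f) (hw : w ∈ basePolytope f) (hvw : v ≠ w)
    (hedge : IsExtreme ℝ (basePolytope f) (segment ℝ v w)) :
    ∃ i j : ι, i ≠ j ∧ ∃ c : ℝ, v - w = c • (Pi.single i (1 : ℝ) - Pi.single j (1 : ℝ)) := by
  set m := midpoint ℝ v w
  have hm_open : m ∈ openSegment ℝ v w := midpoint_mem_openSegment v w
  have hm : m ∈ basePolytope f := convex_basePolytope.openSegment_subset hv hw hm_open
  obtain ⟨i, j, hij, hsame⟩ := exists_ne_forall_isTight_iff hf hm (d := v - w)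
    (fun J hJ => by
      simp only [Pi.sub_apply, sum_sub_distrib, sub_eq_zero]
      exact (hJ.left_of_mem_openSegment hv hw hm_open).trans
        (hJ.left_of_mem_openSegment hw hv (openSegment_symm ℝ v w ▸ hm_open)).symm)
    (sub_ne_zero.2 hvw)
  set e : ι → ℝ := Pi.single i 1 - Pi.single j 1
  obtain ⟨ε, hε, hplus, hminus⟩ := exists_pos_add_sub_smul_mem_basePolytope hm (e := e)
    (fun J hJ => by simp [e, sum_sub_distrib, sum_pi_single', hsame J hJ])
  have hm_seg : m ∈ segment ℝ v w := openSegment_subset_segment _ _ _ hm_open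
  have hm_open' : m ∈ openSegment ℝ (m - ε • e) (m + ε • e) :=
    mem_openSegment_sub_add m (ε • e)
  have hminus_seg := hedge.left_mem_of_mem_openSegment hminus hplus hm_seg hm_open'
  have hplus_seg := hedge.right_mem_of_mem_openSegment hminus hplus hm_seg hm_open'
  obtain ⟨t, ht⟩ := exists_sub_eq_smul_sub_of_mem_segment hplus_seg hminus_seg
  have ht0 : t ≠ 0 := by
    rintro rfl
    simpa [e, hij, hε.ne'] using congrFun ht i
  refine ⟨i, j, hij, t⁻¹ * (2 * ε), ?_⟩
  rw [mul_smul, eq_inv_smul_iff₀ ht0, ← ht]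
  module

end BasePolytope

theorem Antitone.sum_range_card_union_add_sum_range_card_inter_le {ι : Type*} [DecidableEq ι]
    {a : ℕ → ℝ} (ha : Antitone a) (A B : Finset ι) :
    ∑ i ∈ range (A ∪ B).card, a i + ∑ i ∈ range (A ∩ B).card, a i ≤
      ∑ i ∈ range A.card, a i + ∑ i ∈ range B.card, a i := by
  obtain ⟨t, hA⟩ :=
    Nat.exists_eq_add_of_le (card_le_card (inter_subset_left (s₁ := A) (s₂ := B)))
  have hB : (A ∩ B).card ≤ B.card := card_le_card inter_subset_right
  have hunion : (A ∪ B).card = B.card + t := by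
    have := card_union_add_card_inter A B
    omega
  rw [hunion, hA, sum_range_add, sum_range_add]
  have : ∑ i ∈ range t, a (B.card + i) ≤ ∑ i ∈ range t, a ((A ∩ B).card + i) :=
    sum_le_sum fun i _ => ha (by omega)
  linarith

section SIM

variable {n : ℕ} {α : Fin n → ℝ}

noncomputable def simPartialSum (α : Fin n → ℝ) (k : ℕ) : ℝ :=
  ∑ j ∈ univ.filter (fun j : Fin n => (j : ℕ) < k), α j

noncomputable def zeroExtend (α : Fin n → ℝ) (k : ℕ) : ℝ :=
  if h : k < n then α ⟨k, h⟩ else 0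

noncomputable def homSIMRank (α : Fin n → ℝ) (J : Finset (Fin (n + 1))) : ℝ :=
  if Fin.last n ∈ J then ∑ i, α i else simPartialSum α J.card

theorem antitone_zeroExtend (hα : Antitone α) (h0 : ∀ i, 0 ≤ α i) :
    Antitone (zeroExtend α) := by
  intro k l hkl
  unfold zeroExtend
  by_cases hl : l < n
  · rw [dif_pos hl, dif_pos (hkl.trans_lt hl)]
    exact hα (Fin.mk_le_mk.2 hkl)
  · rw [dif_neg hl]
    split_ifs
    exacts [h0 _, le_rfl]

theorem simPartialSum_eq_sum_range (α : Fin n → ℝ) (k : ℕ) :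
    simPartialSum α k = ∑ i ∈ range k, zeroExtend α i := by
  induction k with
  | zero => simp [simPartialSum]
  | succ k ih =>
    rw [sum_range_succ, ← ih, simPartialSum, simPartialSum, zeroExtend]
    split_ifs with hk
    · rw [add_comm (∑ j ∈ _, α j), ← sum_insert (s := univ.filter fun j : Fin n => (j : ℕ) < k)
        (a := (⟨k, hk⟩ : Fin n)) (by simp)]
      congr 1
      ext j
      simp only [mem_filter, mem_univ, true_and, mem_insert, Fin.ext_iff]
      omega
    · rw [add_zero]
      congr 1
      ext j
      simp only [mem_filter, mem_univ, true_and]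
      omega

theorem simPartialSum_of_le (hk : n ≤ k) : simPartialSum α k = ∑ i, α i := by
  rw [simPartialSum, filter_true_of_mem fun j _ => j.2.trans_le hk]

theorem simPartialSum_mono (h0 : ∀ i, 0 ≤ α i) : Monotone (simPartialSum α) :=
  fun _ _ hkl => sum_le_sum_of_subset_of_nonneg
    (fun j hj => mem_filter.2 ⟨mem_univ j, (mem_filter.1 hj).2.trans_le hkl⟩) fun i _ _ => h0 i

theorem isSubmodular_homSIMRank (hα : Antitone α) (h0 : ∀ i, 0 ≤ α i) :
    IsSubmodular (homSIMRank α) := by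
  intro A B
  have hg_mono := simPartialSum_mono h0
  by_cases hA : Fin.last n ∈ A <;> by_cases hB : Fin.last n ∈ B <;>
    simp only [homSIMRank, mem_union, mem_inter, hA, hB, or_true, and_true,
      or_false, and_false, if_true, if_false]
  · exact le_rfl
  · linarith [hg_mono (card_le_card (inter_subset_right (s₁ := A) (s₂ := B)))]
  · linarith [hg_mono (card_le_card (inter_subset_left (s₁ := A) (s₂ := B)))]
  · simp only [simPartialSum_eq_sum_range]
    exact (antitone_zeroExtend hα h0).sum_range_card_union_add_sum_range_card_inter_le A B

theorem mem_SIM_iff {x : Fin n → ℝ} :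
    x ∈ SIM α ↔
      (∀ i, 0 ≤ x i) ∧ ∀ I : Finset (Fin n), ∑ i ∈ I, x i ≤ simPartialSum α I.card := by
  refine and_congr_right fun _ => ⟨fun h I => ?_, fun h I _ => h I⟩
  rcases I.eq_empty_or_nonempty with rfl | hI
  · simp [simPartialSum]
  · exact h I hI

theorem exists_map_castSuccEmb_eq {J : Finset (Fin (n + 1))} (hJ : Fin.last n ∉ J) :
    ∃ I : Finset (Fin n), I.map Fin.castSuccEmb = J := by
  refine ⟨univ.filter fun i => i.castSucc ∈ J, ?_⟩
  ext k
  induction k using Fin.lastCases with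
  | last => simp [hJ, Fin.castSucc_ne_last]
  | cast i => simp

theorem homSIMRank_map_castSuccEmb (I : Finset (Fin n)) :
    homSIMRank α (I.map Fin.castSuccEmb) = simPartialSum α I.card := by
  simp [homSIMRank, Fin.castSucc_ne_last]

theorem snoc_mem_basePolytope {x : Fin n → ℝ} (hx : x ∈ SIM α) :
    Fin.snoc x ((∑ i, α i) - ∑ i, x i) ∈ basePolytope (homSIMRank α) := by
  obtain ⟨hx0, hxI⟩ := mem_SIM_iff.1 hx
  set y : Fin (n + 1) → ℝ := Fin.snoc x ((∑ i, α i) - ∑ i, x i)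
  have hsum : ∑ k, y k = ∑ i, α i := by simp [y, Fin.sum_univ_castSucc]
  have hy0 : ∀ k, 0 ≤ y k := by
    intro k
    induction k using Fin.lastCases with
    | last => simpa [y, ← simPartialSum_of_le le_rfl] using hxI univ
    | cast i => simpa [y] using hx0 i
  refine ⟨fun J => ?_, by simp [hsum, homSIMRank]⟩
  by_cases hJ : Fin.last n ∈ J
  · rw [homSIMRank, if_pos hJ, ← hsum]
    exact sum_le_sum_of_subset_of_nonneg (subset_univ J) fun k _ _ => hy0 k
  · obtain ⟨I, rfl⟩ := exists_map_castSuccEmb_eq hJ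
    simpa [homSIMRank_map_castSuccEmb, y] using hxI I

theorem mem_homSIM_of_mem_basePolytope {y : Fin (n + 1) → ℝ}
    (hy : y ∈ basePolytope (homSIMRank α)) : y ∈ homSIM α := by
  obtain ⟨hyJ, hy_univ⟩ := hy
  rw [homSIMRank, if_pos (mem_univ _), Fin.sum_univ_castSucc] at hy_univ
  refine ⟨fun i => y i.castSucc, mem_SIM_iff.2 ⟨fun i => ?_, fun I => ?_⟩, ?_⟩
  · have h := hyJ (univ.erase i.castSucc)
    rw [homSIMRank, if_pos (mem_erase.2 ⟨(Fin.castSucc_ne_last i).symm, mem_univ _⟩),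
      sum_erase_eq_sub (mem_univ _), Fin.sum_univ_castSucc] at h
    linarith
  · simpa [homSIMRank_map_castSuccEmb] using hyJ (I.map Fin.castSuccEmb)
  · ext k
    induction k using Fin.lastCases with
    | last => simp only [Fin.snoc_last]; linarith
    | cast i => simp

theorem homSIM_eq_basePolytope : homSIM α = basePolytope (homSIMRank α) := by
  refine Set.Subset.antisymm ?_ fun y hy => mem_homSIM_of_mem_basePolytope hy
  rintro _ ⟨x, hx, rfl⟩
  exact snoc_mem_basePolytope hx

end SIM

theorem homogeneous_sim_body_generalized_permutahedron_general (n : ℕ) (α : Fin n → ℝ)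
    (hdec : ∀ i j : Fin n, i ≤ j → α j ≤ α i) (hnonneg : ∀ i, 0 ≤ α i) :
    ∀ v w : Fin (n + 1) → ℝ, v ≠ w → v ∈ homSIM α → w ∈ homSIM α →
      IsExtreme ℝ (homSIM α) (segment ℝ v w) →
      ∃ i j : Fin (n + 1), i ≠ j ∧ ∃ c : ℝ,
        v - w = c • (Pi.single i (1 : ℝ) - Pi.single j (1 : ℝ)) := by
  rw [homSIM_eq_basePolytope]
  intro v w hvw hv hw hedge
  have hf : IsSubmodular (homSIMRank α) :=
    isSubmodular_homSIMRank (fun i j hij => hdec i j hij) hnonneg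
  exact hf.exists_sub_eq_smul_single_sub_single hv hw hvw hedge

/-- every edge of the homogeneous SIM-body is parallel to the difference of two
standard basis vectors; i.e., the homogeneous SIM-body is a generalized permutahedron. -/
theorem homogeneous_sim_body_generalized_permutahedron (n : ℕ) (hn : 1 ≤ n) (α : Fin n → ℝ)
    (hdec : ∀ i j : Fin n, i ≤ j → α j ≤ α i) (hnonneg : ∀ i, 0 ≤ α i) :
    ∀ v w : Fin (n + 1) → ℝ, v ≠ w → v ∈ homSIM α → w ∈ homSIM α →
      IsExtreme ℝ (homSIM α) (segment ℝ v w) →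
      ∃ i j : Fin (n + 1), i ≠ j ∧ ∃ c : ℝ,
        v - w = c • (Pi.single i (1 : ℝ) - Pi.single j (1 : ℝ)) :=
  homogeneous_sim_body_generalized_permutahedron_general n α hdec hnonneg
end
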